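/- For any group G, the set LO(G) of positive cones of left orderings is a closed subset of 2^G with the product topology; in particular, LO(G) is compact. -/
import Mathlib


/-- A positive cone of a left ordering of `G`. -/
def IsPosCone {G : Type*} [Group G] (P : Set G) : Prop :=
  (∀ a ∈ P, ∀ b ∈ P, a * b ∈ P) ∧
  (∀ g : G, g ∈ P ∨ g⁻¹ ∈ P ∨ g = 1) ∧
  (∀ g : G, g ∈ P → g⁻¹ ∉ P) ∧
  (1 : G) ∉ P

/-- The product (Cantor) topology on `2^α = Set α`, induced from `α → Bool` with
`Bool` discrete, via characteristic functions. -/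
noncomputable instance setProductTopology {α : Type*} : TopologicalSpace (Set α) :=
  TopologicalSpace.induced
    (fun (P : Set α) (a : α) => @decide (a ∈ P) (Classical.propDecidable _)) inferInstance

/-- The space of left orderings of `G`: positive cones with the subspace topology
from `2^G`. -/
def LO (G : Type*) [Group G] : Type _ := {P : Set G // IsPosCone P}

noncomputable instance {G : Type*} [Group G] : TopologicalSpace (LO G) :=
  instTopologicalSpaceSubtype

noncomputable def chi {α : Type*} : Set α → (α → Bool) :=
  fun P a => @decide (a ∈ P) (Classical.propDecidable _)

lemma inducing_chi {α : Type*} : Topology.IsInducing (chi (α := α)) := ⟨rfl⟩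

lemma chi_eq_true {α : Type*} {P : Set α} {a : α} : chi P a = true ↔ a ∈ P := by
  simp [chi]

lemma chi_bijective {α : Type*} : Function.Bijective (chi (α := α)) := by
  constructor
  · intro P Q h
    ext a
    rw [← chi_eq_true, ← chi_eq_true, h]
  · intro f
    refine ⟨{a | f a = true}, ?_⟩
    funext a
    rcases Bool.eq_false_or_eq_true (f a) with h | h <;>
      simp [chi, h]

noncomputable def setBoolHomeo {α : Type*} : Set α ≃ₜ (α → Bool) :=
  (Equiv.ofBijective chi chi_bijective).toHomeomorphOfIsInducing inducing_chi

instance {α : Type*} : CompactSpace (Set α) :=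
  (setBoolHomeo (α := α)).symm.compactSpace

lemma isClopen_mem {α : Type*} (a : α) : IsClopen {P : Set α | a ∈ P} := by
  have hc : Continuous fun P : Set α => chi P a :=
    (continuous_apply a).comp inducing_chi.continuous
  have h : {P : Set α | a ∈ P} = (fun P : Set α => chi P a) ⁻¹' {true} := by
    ext P
    simp [chi_eq_true]
  rw [h]
  exact (isClopen_discrete {true}).preimage hc

/-- for any group `G`, the set of positive cones of left orderings is a
closed subset of `2^G` with the product topology; in particular it is compact. -/
theorem statement12 {G : Type*} [Group G] :
    IsClosed {P : Set G | IsPosCone P} ∧ IsCompact {P : Set G | IsPosCone P} := by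
  have hclosed : IsClosed {P : Set G | IsPosCone P} := by
    have hset : {P : Set G | IsPosCone P} =
        (⋂ a : G, ⋂ b : G, {P : Set G | a ∈ P}ᶜ ∪ {P : Set G | b ∈ P}ᶜ ∪ {P : Set G | a * b ∈ P}) ∩
        ((⋂ g : G, {P : Set G | g ∈ P ∨ g⁻¹ ∈ P ∨ g = 1}) ∩
         ((⋂ g : G, {P : Set G | g ∈ P}ᶜ ∪ {P : Set G | g⁻¹ ∈ P}ᶜ) ∩
          {P : Set G | (1 : G) ∈ P}ᶜ)) := by
      ext P
      simp only [IsPosCone, Set.mem_setOf_eq, Set.mem_inter_iff, Set.mem_iInter,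
        Set.mem_union, Set.mem_compl_iff, Set.mem_setOf_eq]
      constructor
      · rintro ⟨h1, h2, h3, h4⟩
        refine ⟨fun a b => ?_, h2, fun g => ?_, h4⟩
        · by_cases ha : a ∈ P
          · by_cases hb : b ∈ P
            · exact Or.inr (h1 a ha b hb)
            · exact Or.inl (Or.inr hb)
          · exact Or.inl (Or.inl ha)
        · by_cases hg : g ∈ P
          · exact Or.inr (h3 g hg)
          · exact Or.inl hg
      · rintro ⟨h1, h2, h3, h4⟩
        refine ⟨fun a ha b hb => ?_, h2, fun g hg => ?_, h4⟩
        · rcases h1 a b with (h | h) | h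
          · exact absurd ha h
          · exact absurd hb h
          · exact h
        · rcases h3 g with h | h
          · exact absurd hg h
          · exact h
    rw [hset]
    refine IsClosed.inter ?_ (IsClosed.inter ?_ (IsClosed.inter ?_ ?_))
    · exact isClosed_iInter fun a => isClosed_iInter fun b =>
        (((isClopen_mem a).compl.union (isClopen_mem b).compl).union
          (isClopen_mem (a * b))).isClosed
    · refine isClosed_iInter fun g => ?_
      by_cases hg : g = 1
      · have : {P : Set G | g ∈ P ∨ g⁻¹ ∈ P ∨ g = 1} = Set.univ := by
          ext P; simp [hg]
        rw [this]; exact isClosed_univ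
      · have : {P : Set G | g ∈ P ∨ g⁻¹ ∈ P ∨ g = 1} =
            {P : Set G | g ∈ P} ∪ {P : Set G | g⁻¹ ∈ P} := by
          ext P; simp [hg]
        rw [this]
        exact ((isClopen_mem g).union (isClopen_mem g⁻¹)).isClosed
    · exact isClosed_iInter fun g =>
        ((isClopen_mem g).compl.union (isClopen_mem g⁻¹).compl).isClosed
    · exact (isClopen_mem (1 : G)).compl.isClosed
  exact ⟨hclosed, hclosed.isCompact⟩
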